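/- arXiv:1205.1477 — 2 statements merged into one kernel-verified Lean document; each statement's English description precedes it below -/
import Mathlib

section
/- Let N be a matroid on a finite ground set E with rank function r, let z : E → ℝ be a point of the matroid polytope P(N), and let G be an independent set of N such that for every e ∈ G there exists a set S ⊆ E with e ∈ S and ∑_{a∈S} z_a ≥ r(S) − 1/2. Then ∑_{e∈E} z_e ≥ |G|/2. -/
/-!
Call `r(S) - z(S) ≥ 0` the slack of `S`. Since `r` is submodular and `z` is modular, the slack of
`S ∪ T` is at most the sum of the slacks of `S` and `T` minus the (nonnegative) slack of `S ∩ T`.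
Hence the union `U` of the nearly tight sets covering the elements of `G` has slack at most
`|G| / 2`, while `r(U) ≥ |G|` because `G ⊆ U` is independent. So
`z(E) ≥ z(U) ≥ r(U) - |G| / 2 ≥ |G| / 2`.
-/

open scoped BigOperators Classical

/-- The rank function of a matroid: `mrank M S` is the maximum cardinality of an
independent subset of `S`. -/
noncomputable def mrank {α : Type*} (M : Matroid α) (S : Set α) : ℕ :=
  sSup {n : ℕ | ∃ I : Finset α, ↑I ⊆ S ∧ M.Indep ↑I ∧ I.card = n}

namespace Matroid

variable {α : Type*} {N : Matroid α} {S X Y : Set α}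

lemma IsBasis'.mrank_eq_card {I : Finset α} (hI : N.IsBasis' ↑I S) : mrank N S = I.card := by
  refine IsGreatest.csSup_eq ⟨⟨I, hI.subset, hI.indep, rfl⟩, ?_⟩
  rintro n ⟨K, hKS, hK, rfl⟩
  have h := hK.encard_le_eRk_of_subset hKS
  rwa [← hI.encard_eq_eRk, Set.encard_coe_eq_coe_finsetCard, Set.encard_coe_eq_coe_finsetCard,
    Nat.cast_le] at h

variable [Finite α]

lemma mrank_eq_eRk (N : Matroid α) (S : Set α) : (mrank N S : ℕ∞) = N.eRk S := by
  obtain ⟨I, hI⟩ := (N.isRkFinite_of_finite S.toFinite).exists_finset_isBasis'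
  rw [hI.mrank_eq_card, ← hI.encard_eq_eRk, Set.encard_coe_eq_coe_finsetCard]

lemma mrank_empty (N : Matroid α) : mrank N ∅ = 0 := by
  exact_mod_cast (N.mrank_eq_eRk ∅).trans N.eRk_empty

lemma mrank_inter_add_mrank_union_le (N : Matroid α) (X Y : Set α) :
    mrank N (X ∩ Y) + mrank N (X ∪ Y) ≤ mrank N X + mrank N Y := by
  have h := N.eRk_inter_add_eRk_union_le X Y
  simp only [← mrank_eq_eRk] at h
  exact_mod_cast h

lemma Indep.card_le_mrank {I : Finset α} (hI : N.Indep ↑I) (hIX : ↑I ⊆ X) :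
    I.card ≤ mrank N X := by
  have h := hI.encard_le_eRk_of_subset hIX
  rwa [← mrank_eq_eRk, Set.encard_coe_eq_coe_finsetCard, Nat.cast_le] at h

end Matroid

section Slack

variable {α ι : Type*} [DecidableEq α] {f : Finset α → ℝ} {z : α → ℝ}

lemma sub_sum_union_le {A B : Finset α} (hf : f (A ∩ B) + f (A ∪ B) ≤ f A + f B)
    (hz : ∑ a ∈ A ∩ B, z a ≤ f (A ∩ B)) :
    f (A ∪ B) - ∑ a ∈ A ∪ B, z a ≤ (f A - ∑ a ∈ A, z a) + (f B - ∑ a ∈ B, z a) := by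
  have := Finset.sum_union_inter (s₁ := A) (s₂ := B) (f := z)
  linarith

lemma sub_sum_biUnion_le (hf_empty : f ∅ ≤ 0)
    (hf : ∀ A B, f (A ∩ B) + f (A ∪ B) ≤ f A + f B) (hz : ∀ A, ∑ a ∈ A, z a ≤ f A)
    (s : Finset ι) (S : ι → Finset α) :
    f (s.biUnion S) - ∑ a ∈ s.biUnion S, z a ≤ ∑ i ∈ s, (f (S i) - ∑ a ∈ S i, z a) := by
  induction s using Finset.induction_on with
  | empty => simpa using hf_empty
  | insert i s hi ih =>
    rw [Finset.biUnion_insert, Finset.sum_insert hi]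
    exact (sub_sum_union_le (hf _ _) (hz _)).trans (by linarith)

end Slack

theorem nearly_tight_cover_large_size_general
    {α : Type*} [Fintype α] (N : Matroid α)
    (z : α → ℝ) (hz0 : ∀ e, 0 ≤ z e)
    (hzP : ∀ S : Finset α, ∑ e ∈ S, z e ≤ (mrank N ↑S : ℝ))
    (G : Finset α) (hG : N.Indep ↑G)
    (hcov : ∀ e ∈ G, ∃ S : Finset α, e ∈ S ∧
      (mrank N ↑S : ℝ) - 1 / 2 ≤ ∑ a ∈ S, z a) :
    (G.card : ℝ) / 2 ≤ ∑ e : α, z e := by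
  choose! S hmem hS using hcov
  have hGU : G ⊆ G.biUnion S := fun e he => Finset.mem_biUnion.2 ⟨e, he, hmem e he⟩
  have hslack := sub_sum_biUnion_le (f := fun T => (mrank N ↑T : ℝ))
    (by simp [N.mrank_empty])
    (fun A B => by exact_mod_cast N.mrank_inter_add_mrank_union_le ↑A ↑B) hzP G S
  have hslack_le : ∑ e ∈ G, ((mrank N ↑(S e) : ℝ) - ∑ a ∈ S e, z a) ≤ G.card / 2 :=
    calc _ ≤ ∑ _e ∈ G, (1 / 2 : ℝ) := Finset.sum_le_sum fun e he => by linarith [hS e he]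
      _ = G.card / 2 := by rw [Finset.sum_const, nsmul_eq_mul]; ring
  have hrank : (G.card : ℝ) ≤ mrank N ↑(G.biUnion S) := by
    exact_mod_cast hG.card_le_mrank (Finset.coe_subset.2 hGU)
  have hsum : ∑ a ∈ G.biUnion S, z a ≤ ∑ e, z e :=
    Finset.sum_le_sum_of_subset_of_nonneg (Finset.subset_univ _) fun e _ _ => hz0 e
  linarith

theorem nearly_tight_cover_large_size
    {α : Type*} [Fintype α] (N : Matroid α) (hE : N.E = Set.univ)
    (z : α → ℝ) (hz0 : ∀ e, 0 ≤ z e)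
    (hzP : ∀ S : Finset α, ∑ e ∈ S, z e ≤ (mrank N ↑S : ℝ))
    (G : Finset α) (hG : N.Indep ↑G)
    (hcov : ∀ e ∈ G, ∃ S : Finset α, e ∈ S ∧
      (mrank N ↑S : ℝ) - 1 / 2 ≤ ∑ a ∈ S, z a) :
    (G.card : ℝ) / 2 ≤ ∑ e : α, z e :=
  nearly_tight_cover_large_size_general N z hz0 hzP G hG hcov
end

section
/- Let N be a matroid on a finite ground set E of size m with rank function r, and let z : E → [0,1] satisfy ∑_{e∈S} z_e ≤ r(S)/2 for every S ⊆ E. Let F be a random subset of E obtained by including each element e independently with probability z_e. Then for every natural number t, the probability that F cannot be covered by t independent sets of N (i.e. that there do not exist independent sets I_1, …, I_t of N with F ⊆ I_1 ∪ ⋯ ∪ I_t) is at most m·2^{−t}. -/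
open scoped BigOperators Classical

/-!
Order the ground set and let `greedyBasis N F` keep the elements of `F` not spanned by the
smaller elements of `F`; it is a basis of `F`. Conditioned on `greedyBasis N F = B`, the rest
`F \ B` is again a random subset with the same marginals, now of `spannedBelow N B V`. Peeling
off one greedy basis per round gives, by induction on `t`, that the probability of needing more
than `t + 1` independent sets is at most `2⁻ᵗ E[z(spannedBelow N (greedyBasis N F) V)]`, and this
expectation equals `E[|F| - r(F)]`. The latter is at most `z(V) / 2` because `E[2 r(F) - |F|] ≥ 0`
when `2 z` lies in the independence polytope: pivot on one element `f`, contract it in the branch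
`f ∈ F`, and induct with a slack that absorbs `2 z f`.
-/

open Finset

section Rank

variable {α : Type*} {N : Matroid α}

lemma natCast_mrank_eq_eRk (S : Finset α) : (mrank N ↑S : ℕ∞) = N.eRk ↑S := by
  have hbdd : BddAbove {n : ℕ | ∃ I : Finset α, ↑I ⊆ (↑S : Set α) ∧ N.Indep ↑I ∧ I.card = n} :=
    ⟨S.card, by rintro _ ⟨I, hIS, -, rfl⟩; exact card_le_card (by exact_mod_cast hIS)⟩
  apply le_antisymm
  · obtain ⟨I, hIS, hI, hcard⟩ :=
      Nat.sSup_mem (s := {n | ∃ I : Finset α, ↑I ⊆ (↑S : Set α) ∧ N.Indep ↑I ∧ #I = n})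
        ⟨0, ∅, by simp, by simp, rfl⟩ hbdd
    rw [mrank, ← hcard, ← Set.encard_coe_eq_coe_finsetCard]
    exact hI.encard_le_eRk_of_subset hIS
  · refine Matroid.eRk_le_iff.2 fun I hIS hI => ?_
    lift I to Finset α using S.finite_toSet.subset hIS
    rw [Set.encard_coe_eq_coe_finsetCard, Nat.cast_le]
    exact le_csSup hbdd ⟨I, hIS, hI, rfl⟩

lemma mrank_empty : mrank N ↑(∅ : Finset α) = 0 := by
  have := natCast_mrank_eq_eRk (N := N) ∅
  rw [coe_empty, Matroid.eRk_empty] at this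
  exact_mod_cast this

lemma mrank_eq_card_of_isBasis {I S : Finset α} (h : N.IsBasis ↑I ↑S) : mrank N ↑S = #I := by
  have := natCast_mrank_eq_eRk (N := N) S
  rw [← h.encard_eq_eRk, Set.encard_coe_eq_coe_finsetCard] at this
  exact_mod_cast this

lemma mrank_insert_of_mem_closure [DecidableEq α] {e : α} {S : Finset α} (he : e ∈ N.closure ↑S) :
    mrank N ↑(insert e S) = mrank N ↑S := by
  have : N.eRk (insert e ↑S) = N.eRk ↑S := by
    rw [← N.eRk_closure_eq, Matroid.closure_insert_eq_of_mem_closure he, N.eRk_closure_eq]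
  rw [← coe_insert, ← natCast_mrank_eq_eRk, ← natCast_mrank_eq_eRk] at this
  exact_mod_cast this

lemma mrank_insert_of_notMem_closure [DecidableEq α] {e : α} {S : Finset α} (heE : e ∈ N.E)
    (he : e ∉ N.closure ↑S) : mrank N ↑(insert e S) = mrank N ↑S + 1 := by
  have := Matroid.eRk_insert_eq_add_one (M := N) ⟨heE, he⟩
  rw [← coe_insert, ← natCast_mrank_eq_eRk, ← natCast_mrank_eq_eRk] at this
  exact_mod_cast this

end Rank

section RandomSubset

variable {α : Type*} (z : α → ℝ)

noncomputable def subsetProb [DecidableEq α] (V F : Finset α) : ℝ :=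
  (∏ a ∈ F, z a) * ∏ a ∈ V \ F, (1 - z a)

noncomputable def subsetExpect [DecidableEq α] (V : Finset α) (Q : Finset α → ℝ) : ℝ :=
  ∑ F ∈ V.powerset, subsetProb z V F * Q F

variable {z} [DecidableEq α]

lemma subsetProb_nonneg (hz : ∀ e, 0 ≤ z e ∧ z e ≤ 1) (V F : Finset α) :
    0 ≤ subsetProb z V F :=
  mul_nonneg (prod_nonneg fun a _ => (hz a).1) (prod_nonneg fun a _ => sub_nonneg.2 (hz a).2)

lemma subsetProb_union {V W B X : Finset α} (hW : W ⊆ V) (hB : B ⊆ V \ W) (hX : X ⊆ W) :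
    subsetProb z V (B ∪ X) = subsetProb z (V \ W) B * subsetProb z W X := by
  have hBX : Disjoint B X :=
    disjoint_of_subset_left hB (disjoint_of_subset_right hX sdiff_disjoint)
  have hcompl : V \ (B ∪ X) = (V \ W) \ B ∪ W \ X := by
    ext a
    have := @hW a
    have := @hB a
    have := @hX a
    simp only [mem_sdiff, mem_union] at *
    tauto
  have hdisj : Disjoint ((V \ W) \ B) (W \ X) :=
    disjoint_of_subset_left sdiff_subset (disjoint_of_subset_right sdiff_subset sdiff_disjoint)
  rw [subsetProb, subsetProb, subsetProb, prod_union hBX, hcompl, prod_union hdisj]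
  ring

lemma subsetExpect_insert {a : α} {V : Finset α} (ha : a ∉ V) (Q : Finset α → ℝ) :
    subsetExpect z (insert a V) Q =
      z a * subsetExpect z V (fun X => Q (insert a X)) + (1 - z a) * subsetExpect z V Q := by
  have haX : ∀ X ∈ V.powerset, a ∉ X := fun X hX h => ha (mem_powerset.1 hX h)
  rw [subsetExpect, sum_powerset_insert ha, add_comm, subsetExpect, subsetExpect, mul_sum, mul_sum]
  congr 1 <;> refine sum_congr rfl fun X hX => ?_
  · rw [subsetProb, subsetProb, insert_sdiff_insert, sdiff_insert_of_notMem ha,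
      prod_insert (haX X hX)]
    ring
  · rw [subsetProb, subsetProb, insert_sdiff_of_notMem _ (haX X hX),
      prod_insert fun h => ha (mem_sdiff.1 h).1]
    ring

lemma subsetExpect_const (V : Finset α) (c : ℝ) : subsetExpect z V (fun _ => c) = c := by
  rw [subsetExpect, ← sum_mul]
  simp only [subsetProb, ← prod_add, add_sub_cancel, prod_const_one, one_mul]

lemma subsetExpect_congr {V : Finset α} {Q R : Finset α → ℝ} (h : ∀ F ⊆ V, Q F = R F) :
    subsetExpect z V Q = subsetExpect z V R :=
  sum_congr rfl fun F hF => by rw [h F (mem_powerset.1 hF)]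

lemma subsetExpect_mono (hz : ∀ e, 0 ≤ z e ∧ z e ≤ 1) {V : Finset α} {Q R : Finset α → ℝ}
    (h : ∀ F ⊆ V, Q F ≤ R F) : subsetExpect z V Q ≤ subsetExpect z V R :=
  sum_le_sum fun F hF =>
    mul_le_mul_of_nonneg_left (h F (mem_powerset.1 hF)) (subsetProb_nonneg hz V F)

lemma subsetExpect_sub (V : Finset α) (Q R : Finset α → ℝ) :
    subsetExpect z V (fun F => Q F - R F) = subsetExpect z V Q - subsetExpect z V R := by
  simp only [subsetExpect, mul_sub, sum_sub_distrib]

lemma subsetExpect_mul_left (V : Finset α) (c : ℝ) (Q : Finset α → ℝ) :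
    subsetExpect z V (fun F => c * Q F) = c * subsetExpect z V Q := by
  simp only [subsetExpect, mul_sum, mul_left_comm c]

lemma subsetExpect_sum {ι : Type*} (V : Finset α) (I : Finset ι) (Q : ι → Finset α → ℝ) :
    subsetExpect z V (fun F => ∑ i ∈ I, Q i F) = ∑ i ∈ I, subsetExpect z V (Q i) := by
  simp only [subsetExpect, mul_sum]
  exact sum_comm

lemma subsetExpect_empty (Q : Finset α → ℝ) : subsetExpect z ∅ Q = Q ∅ := by
  simp [subsetExpect, subsetProb]

lemma subsetExpect_ite_mem {f : α} {V : Finset α} (hf : f ∈ V) {Q : Finset α → ℝ}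
    (hQ : ∀ X, Q (insert f X) = Q X) :
    subsetExpect z V (fun F => if f ∈ F then Q F else 0) = z f * subsetExpect z V Q := by
  have hfV := notMem_erase f V
  have hout : subsetExpect z (V.erase f) (fun F => if f ∈ F then Q F else 0) = 0 := by
    rw [subsetExpect_congr (R := fun _ => 0) fun X hX => if_neg fun h => hfV (hX h),
      subsetExpect_const]
  rw [← insert_erase hf, subsetExpect_insert hfV, subsetExpect_insert hfV, hout]
  simp only [mem_insert_self, if_true, hQ]
  ring

lemma subsetExpect_card (V : Finset α) : subsetExpect z V (fun F => (#F : ℝ)) = ∑ a ∈ V, z a := by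
  have hcard : ∀ F ⊆ V, (#F : ℝ) = ∑ a ∈ V, if a ∈ F then 1 else 0 := fun F hF => by
    rw [sum_boole, filter_mem_eq_inter, inter_eq_right.2 hF]
  rw [subsetExpect_congr hcard, subsetExpect_sum]
  refine sum_congr rfl fun a ha => ?_
  rw [subsetExpect_ite_mem ha (Q := fun _ => 1) fun _ => rfl, subsetExpect_const, mul_one]

end RandomSubset

section HalfRankPolytope

variable {α : Type*} [DecidableEq α] {N : Matroid α} {z : α → ℝ}

/- `S ↦ r(A ∪ S) - r(A)` is the rank function of `N ／ A`, so carrying `A` along replaces the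
contraction of the pivot element. -/
theorem le_subsetExpect_two_mul_mrank_union_sub_card (hE : N.E = Set.univ)
    (hz : ∀ e, 0 ≤ z e ∧ z e ≤ 1) (V A : Finset α) {c : ℝ} (hc : 0 ≤ c)
    (hA : ∀ S ⊆ V, 2 * ∑ a ∈ S, z a ≤ mrank N ↑(A ∪ S) - mrank N ↑A + c) :
    2 * (mrank N ↑A : ℝ) - c ≤
      subsetExpect z V (fun F => 2 * (mrank N ↑(A ∪ F) : ℝ) - #F) := by
  induction V using Finset.induction_on generalizing A c with
  | empty =>
    rw [subsetExpect_empty, union_empty, card_empty, Nat.cast_zero, sub_zero]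
    linarith
  | insert f W hfW ih =>
    have hAf : ∀ S ⊆ W, 2 * z f + 2 * ∑ a ∈ S, z a ≤
        mrank N ↑(insert f A ∪ S) - mrank N ↑A + c := fun S hS => by
      have hfS : f ∉ S := fun h => hfW (hS h)
      have := hA (insert f S) (insert_subset_insert f hS)
      rwa [sum_insert hfS, union_insert, ← insert_union, mul_add] at this
    have hAW : ∀ S ⊆ W, 2 * ∑ a ∈ S, z a ≤ mrank N ↑(A ∪ S) - mrank N ↑A + c :=
      fun S hS => hA S (hS.trans (subset_insert f W))
    have hinsert : subsetExpect z W (fun X => 2 * (mrank N ↑(A ∪ insert f X) : ℝ) - #(insert f X)) =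
        subsetExpect z W (fun X => 2 * (mrank N ↑(insert f A ∪ X) : ℝ) - #X) - 1 := by
      rw [← subsetExpect_const (z := z) W 1, ← subsetExpect_sub]
      refine subsetExpect_congr fun X hX => ?_
      rw [union_insert, ← insert_union, card_insert_of_notMem fun h => hfW (hX h)]
      push_cast
      ring
    have hf := hAf ∅ (empty_subset W)
    rw [union_empty, sum_empty, mul_zero, add_zero] at hf
    rw [subsetExpect_insert hfW, hinsert]
    by_cases hcl : f ∈ N.closure ↑A
    · have hloop : ∀ X : Finset α, mrank N ↑(insert f A ∪ X) = mrank N ↑(A ∪ X) := fun X => by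
        rw [insert_union]
        exact mrank_insert_of_mem_closure
          (N.closure_subset_closure (coe_subset.2 subset_union_left) hcl)
      simp only [hloop] at hAf ⊢
      rw [mrank_insert_of_mem_closure hcl] at hf
      have := ih A (c := c - 2 * z f) (by linarith) fun S hS => by linarith [hAf S hS]
      linarith [(hz f).1]
    · have hrank := mrank_insert_of_notMem_closure (hE ▸ Set.mem_univ f) hcl
      rw [hrank, Nat.cast_add, Nat.cast_one] at hf
      have hIn := ih (insert f A) (c := c + 1 - 2 * z f) (by linarith)
        fun S hS => by rw [hrank, Nat.cast_add, Nat.cast_one]; linarith [hAf S hS]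
      have hOut := ih A hc hAW
      rw [hrank, Nat.cast_add, Nat.cast_one] at hIn
      -- the two branches together give `2 r(A) - c + 2 (z f)²`
      nlinarith [mul_le_mul_of_nonneg_left hIn (hz f).1,
        mul_le_mul_of_nonneg_left hOut (sub_nonneg.2 (hz f).2), sq_nonneg (z f)]

theorem subsetExpect_card_sub_mrank_le
    (hE : N.E = Set.univ) (hz : ∀ e, 0 ≤ z e ∧ z e ≤ 1)
    (hzP : ∀ S : Finset α, ∑ e ∈ S, z e ≤ (mrank N ↑S : ℝ) / 2) (V : Finset α) :
    subsetExpect z V (fun F => (#F : ℝ) - mrank N ↑F) ≤ (∑ a ∈ V, z a) / 2 := by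
  have h := le_subsetExpect_two_mul_mrank_union_sub_card hE hz V ∅ le_rfl fun S _ => by
    rw [empty_union, mrank_empty, Nat.cast_zero]; linarith [hzP S]
  simp only [empty_union, mrank_empty, Nat.cast_zero, mul_zero, sub_zero] at h
  rw [subsetExpect_sub, subsetExpect_mul_left, subsetExpect_card] at h
  rw [subsetExpect_sub, subsetExpect_card]
  linarith

end HalfRankPolytope

section GreedyBasis

variable {α : Type*} [LinearOrder α] (N : Matroid α)

noncomputable def greedyBasis (F : Finset α) : Finset α :=
  {e ∈ F | e ∉ N.closure ↑{x ∈ F | x < e}}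

noncomputable def spannedBelow (B V : Finset α) : Finset α :=
  {e ∈ V | e ∈ N.closure ↑{x ∈ B | x < e}}

variable {N}

lemma greedyBasis_subset (F : Finset α) : greedyBasis N F ⊆ F := filter_subset _ _

lemma filter_lt_greedyBasis (F : Finset α) (a : α) :
    {x ∈ greedyBasis N F | x < a} = greedyBasis N {x ∈ F | x < a} := by
  ext e
  simp only [greedyBasis, mem_filter]
  by_cases hea : e < a
  · have hbelow : {x ∈ {x ∈ F | x < a} | x < e} = {x ∈ F | x < e} := by
      rw [filter_filter]
      exact filter_congr fun x _ => ⟨And.right, fun hxe => ⟨hxe.trans hea, hxe⟩⟩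
    rw [hbelow]
    tauto
  · tauto

lemma greedyBasis_insert_of_forall_lt [DecidableEq α] {a : α} {F : Finset α}
    (ha : ∀ x ∈ F, x < a) :
    greedyBasis N (insert a F) =
      if a ∈ N.closure ↑F then greedyBasis N F else insert a (greedyBasis N F) := by
  have hbelow : {x ∈ insert a F | x < a} = F := by
    ext x; simp only [mem_filter, mem_insert]; constructor
    · rintro ⟨rfl | hx, hxa⟩
      · exact absurd hxa (lt_irrefl x)
      · exact hx
    · exact fun hx => ⟨Or.inr hx, ha x hx⟩
  have hrest : {e ∈ F | e ∉ N.closure ↑{x ∈ insert a F | x < e}} = greedyBasis N F :=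
    filter_congr fun e he => by
      rw [filter_insert, if_neg (lt_asymm (ha e he))]
  rw [greedyBasis, filter_insert, hbelow, hrest]
  split_ifs <;> rfl

lemma isBasis_greedyBasis (hE : N.E = Set.univ) (F : Finset α) :
    N.IsBasis ↑(greedyBasis N F) ↑F := by
  induction F using Finset.induction_on_max with
  | empty => simp [greedyBasis]
  | insert a F ha ih =>
    have hcl := ih.closure_eq_closure
    rw [greedyBasis_insert_of_forall_lt ha]
    split_ifs with haF
    · refine Matroid.Indep.isBasis_of_subset_of_subset_closure ih.indep ?_ ?_
      · exact (coe_subset.2 (greedyBasis_subset F)).trans (by simp)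
      · rw [coe_insert]
        exact Set.insert_subset (by rwa [hcl]) ih.subset_closure
    · rw [coe_insert, coe_insert]
      exact ih.insert_isBasis_insert_of_notMem_closure (by rwa [hcl]) (hE ▸ Set.mem_univ a)

lemma closure_filter_lt_greedyBasis (hE : N.E = Set.univ) (F : Finset α) (e : α) :
    N.closure ↑{x ∈ greedyBasis N F | x < e} = N.closure ↑{x ∈ F | x < e} := by
  rw [filter_lt_greedyBasis]
  exact (isBasis_greedyBasis hE _).closure_eq_closure

lemma greedyBasis_greedyBasis (hE : N.E = Set.univ) (F : Finset α) :
    greedyBasis N (greedyBasis N F) = greedyBasis N F := by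
  conv_lhs => rw [greedyBasis]
  refine filter_true_of_mem fun e he => ?_
  rw [closure_filter_lt_greedyBasis hE]
  exact (mem_filter.1 he).2

lemma disjoint_spannedBelow {B : Finset α} (hB : greedyBasis N B = B) (V : Finset α) :
    Disjoint B (spannedBelow N B V) := by
  rw [disjoint_right]
  intro e he heB
  rw [← hB] at heB
  exact (mem_filter.1 heB).2 (hB ▸ (mem_filter.1 he).2)

lemma mem_spannedBelow_greedyBasis (hE : N.E = Set.univ) {F V : Finset α} {e : α} :
    e ∈ spannedBelow N (greedyBasis N F) V ↔ e ∈ V ∧ e ∈ N.closure ↑{x ∈ F | x < e} := by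
  rw [spannedBelow, mem_filter, closure_filter_lt_greedyBasis hE]

lemma sdiff_greedyBasis_subset_spannedBelow [DecidableEq α] (hE : N.E = Set.univ)
    {F V : Finset α} (hFV : F ⊆ V) : F \ greedyBasis N F ⊆ spannedBelow N (greedyBasis N F) V := by
  intro e he
  rw [mem_sdiff, greedyBasis, mem_filter, not_and, not_not] at he
  exact (mem_spannedBelow_greedyBasis hE).2 ⟨hFV he.1, he.2 he.1⟩

lemma greedyBasis_union_of_subset_spannedBelow [DecidableEq α] (hE : N.E = Set.univ)
    {B V X : Finset α} (hB : greedyBasis N B = B) (hX : X ⊆ spannedBelow N B V) :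
    greedyBasis N (B ∪ X) = B := by
  have hXcl : ∀ e, ↑{x ∈ X | x < e} ⊆ N.closure ↑{x ∈ B | x < e} := fun e x hx => by
    rw [mem_coe, mem_filter] at hx
    refine N.closure_subset_closure (coe_subset.2 fun y hy => ?_) (mem_filter.1 (hX hx.1)).2
    rw [mem_filter] at hy ⊢
    exact ⟨hy.1, hy.2.trans hx.2⟩
  have hcl : ∀ e, N.closure ↑{x ∈ B ∪ X | x < e} = N.closure ↑{x ∈ B | x < e} := fun e => by
    rw [filter_union, coe_union]
    refine (N.closure_subset_closure_of_subset_closure (Set.union_subset ?_ (hXcl e))).antisymm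
      (N.closure_subset_closure Set.subset_union_left)
    exact N.subset_closure _ (hE ▸ Set.subset_univ _)
  calc greedyBasis N (B ∪ X)
      = {e ∈ B | e ∉ N.closure ↑{x ∈ B | x < e}} ∪
          {e ∈ X | e ∉ N.closure ↑{x ∈ B | x < e}} := by
        rw [← filter_union]
        exact filter_congr fun e _ => by rw [hcl]
    _ = B := by
        rw [filter_false_of_mem fun e he => not_not.2 (mem_filter.1 (hX he)).2, union_empty]
        exact hB

lemma mrank_add_card_filter_mem_closure (hE : N.E = Set.univ) (F : Finset α) :
    mrank N ↑F + #{e ∈ F | e ∈ N.closure ↑{x ∈ F | x < e}} = #F := by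
  rw [mrank_eq_card_of_isBasis (isBasis_greedyBasis hE F), add_comm]
  exact card_filter_add_card_filter_not _

end GreedyBasis

section Conditioning

variable {α : Type*} [DecidableEq α] [LinearOrder α] {N : Matroid α} {z : α → ℝ}

theorem subsetExpect_eq_sum_greedyBasis (hE : N.E = Set.univ) (V : Finset α)
    (Q : Finset α → ℝ) :
    subsetExpect z V Q = ∑ B ∈ V.powerset with greedyBasis N B = B,
      subsetProb z (V \ spannedBelow N B V) B *
        subsetExpect z (spannedBelow N B V) (fun X => Q (B ∪ X)) := by
  have hmaps : ∀ F ∈ V.powerset, greedyBasis N F ∈ {B ∈ V.powerset | greedyBasis N B = B} :=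
    fun F hF => mem_filter.2 ⟨mem_powerset.2 ((greedyBasis_subset F).trans (mem_powerset.1 hF)),
      greedyBasis_greedyBasis hE F⟩
  rw [subsetExpect, ← sum_fiberwise_of_maps_to hmaps]
  refine sum_congr rfl fun B hB => ?_
  obtain ⟨hBV, hBB⟩ := mem_filter.1 hB
  have hRV : spannedBelow N B V ⊆ V := filter_subset _ _
  have hdisj := disjoint_spannedBelow hBB V
  rw [subsetExpect, mul_sum]
  refine sum_nbij' (fun F => F \ B) (fun X => B ∪ X) ?_ ?_ ?_ ?_ ?_
  · rintro F hF
    obtain ⟨hFV, rfl⟩ := mem_filter.1 hF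
    exact mem_powerset.2 (sdiff_greedyBasis_subset_spannedBelow hE (mem_powerset.1 hFV))
  · rintro X hX
    have hXR := mem_powerset.1 hX
    exact mem_filter.2 ⟨mem_powerset.2 (union_subset (mem_powerset.1 hBV) (hXR.trans hRV)),
      greedyBasis_union_of_subset_spannedBelow hE hBB hXR⟩
  · rintro F hF
    obtain ⟨-, rfl⟩ := mem_filter.1 hF
    exact union_sdiff_of_subset (greedyBasis_subset F)
  · rintro X hX
    exact union_sdiff_cancel_left (hdisj.mono_right (mem_powerset.1 hX))
  · rintro F hF
    obtain ⟨hFV, hFB⟩ := mem_filter.1 hF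
    have hBF : B ⊆ F := hFB ▸ greedyBasis_subset F
    have hFR : F \ B ⊆ spannedBelow N B V :=
      hFB ▸ sdiff_greedyBasis_subset_spannedBelow hE (mem_powerset.1 hFV)
    have hBVR : B ⊆ V \ spannedBelow N B V :=
      subset_sdiff.2 ⟨mem_powerset.1 hBV, hdisj⟩
    rw [union_sdiff_of_subset hBF, ← mul_assoc, ← subsetProb_union hRV hBVR hFR,
      union_sdiff_of_subset hBF]

theorem subsetExpect_sdiff_greedyBasis_le (hE : N.E = Set.univ) (hz : ∀ e, 0 ≤ z e ∧ z e ≤ 1)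
    {Q g : Finset α → ℝ} (h : ∀ W, subsetExpect z W Q ≤ g W) (V : Finset α) :
    subsetExpect z V (fun F => Q (F \ greedyBasis N F)) ≤
      subsetExpect z V (fun F => g (spannedBelow N (greedyBasis N F) V)) := by
  rw [subsetExpect_eq_sum_greedyBasis hE, subsetExpect_eq_sum_greedyBasis hE]
  refine sum_le_sum fun B hB => mul_le_mul_of_nonneg_left ?_ (subsetProb_nonneg hz _ _)
  have hBB := (mem_filter.1 hB).2
  have hfiber : ∀ X ⊆ spannedBelow N B V, greedyBasis N (B ∪ X) = B := fun X hX =>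
    greedyBasis_union_of_subset_spannedBelow hE hBB hX
  calc subsetExpect z (spannedBelow N B V) (fun X => Q ((B ∪ X) \ greedyBasis N (B ∪ X)))
      = subsetExpect z (spannedBelow N B V) Q := subsetExpect_congr fun X hX => by
        rw [hfiber X hX, union_sdiff_cancel_left ((disjoint_spannedBelow hBB V).mono_right hX)]
    _ ≤ g (spannedBelow N B V) := h _
    _ = _ := (subsetExpect_const _ _).symm.trans (subsetExpect_congr fun X hX => by
        rw [hfiber X hX])

theorem subsetExpect_sum_spannedBelow_greedyBasis (hE : N.E = Set.univ) (V : Finset α) :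
    subsetExpect z V (fun F => ∑ e ∈ spannedBelow N (greedyBasis N F) V, z e) =
      subsetExpect z V (fun F => (#F : ℝ) - mrank N ↑F) := by
  let q : α → Finset α → ℝ := fun e F => if e ∈ N.closure ↑{x ∈ F | x < e} then 1 else 0
  have hq : ∀ e X, q e (insert e X) = q e X := fun e X => by
    simp only [q, filter_insert, lt_irrefl, if_false]
  have hlhs : ∀ F ⊆ V, ∑ e ∈ spannedBelow N (greedyBasis N F) V, z e = ∑ e ∈ V, z e * q e F :=
    fun F _ => by
      simp only [spannedBelow, sum_filter, closure_filter_lt_greedyBasis hE, q, mul_ite, mul_one,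
        mul_zero]
  have hrhs : ∀ F ⊆ V, (#F : ℝ) - mrank N ↑F = ∑ e ∈ V, if e ∈ F then q e F else 0 :=
    fun F hF => by
      rw [sum_ite_mem, inter_eq_right.2 hF, sum_boole, ← mrank_add_card_filter_mem_closure hE F,
        Nat.cast_add]
      ring
  rw [subsetExpect_congr hlhs, subsetExpect_congr hrhs, subsetExpect_sum, subsetExpect_sum]
  refine sum_congr rfl fun e he => ?_
  rw [subsetExpect_mul_left, subsetExpect_ite_mem he (hq e)]

end Conditioning

section Covering

variable {α : Type*} {N : Matroid α}

def IsCoveredByIndep (N : Matroid α) (t : ℕ) (F : Set α) : Prop :=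
  ∃ I : Fin t → Set α, (∀ j, N.Indep (I j)) ∧ F ⊆ ⋃ j, I j

lemma isCoveredByIndep_empty (t : ℕ) : IsCoveredByIndep N t ∅ :=
  ⟨fun _ => ∅, fun _ => N.empty_indep, Set.empty_subset _⟩

lemma IsCoveredByIndep.of_sdiff {t : ℕ} {F I : Set α} (hI : N.Indep I)
    (h : IsCoveredByIndep N t (F \ I)) : IsCoveredByIndep N (t + 1) F := by
  obtain ⟨J, hJ, hcov⟩ := h
  refine ⟨Fin.cons I J, Fin.cases hI hJ, fun x hx => ?_⟩
  by_cases hxI : x ∈ I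
  · exact Set.mem_iUnion.2 ⟨0, by simpa using hxI⟩
  · obtain ⟨j, hj⟩ := Set.mem_iUnion.1 (hcov ⟨hx, hxI⟩)
    exact Set.mem_iUnion.2 ⟨j.succ, by simpa using hj⟩

theorem subsetExpect_not_isCoveredByIndep_le [DecidableEq α] {z : α → ℝ}
    (hE : N.E = Set.univ) (hz : ∀ e, 0 ≤ z e ∧ z e ≤ 1)
    (hzP : ∀ S : Finset α, ∑ e ∈ S, z e ≤ (mrank N ↑S : ℝ) / 2) (t : ℕ) (V : Finset α) :
    subsetExpect z V (fun F => if IsCoveredByIndep N t ↑F then 0 else 1) ≤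
      (∑ a ∈ V, z a) / 2 ^ t := by
  let _ : LinearOrder α := IsWellOrder.linearOrder WellOrderingRel
  induction t generalizing V with
  | zero =>
    rw [pow_zero, div_one, ← subsetExpect_card]
    refine subsetExpect_mono hz fun F _ => ?_
    split_ifs with hF
    · positivity
    · have hne : F.Nonempty := nonempty_iff_ne_empty.2 fun h => hF (by
        rw [h, coe_empty]; exact isCoveredByIndep_empty 0)
      exact_mod_cast card_pos.2 hne
  | succ t ih =>
    calc subsetExpect z V (fun F => if IsCoveredByIndep N (t + 1) ↑F then 0 else 1)
        ≤ subsetExpect z V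
            (fun F => if IsCoveredByIndep N t ↑(F \ greedyBasis N F) then 0 else 1) :=
          subsetExpect_mono hz fun F _ => by
            by_cases h : IsCoveredByIndep N t ↑(F \ greedyBasis N F)
            · rw [coe_sdiff] at h
              rw [if_pos (h.of_sdiff (isBasis_greedyBasis hE F).indep),
                if_pos (by rwa [coe_sdiff])]
            · rw [if_neg h]
              split_ifs <;> norm_num
      _ ≤ subsetExpect z V (fun F => (∑ e ∈ spannedBelow N (greedyBasis N F) V, z e) / 2 ^ t) :=
          subsetExpect_sdiff_greedyBasis_le hE hz ih V
      _ = subsetExpect z V (fun F => (#F : ℝ) - mrank N ↑F) / 2 ^ t := by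
          simp only [div_eq_inv_mul, subsetExpect_mul_left,
            subsetExpect_sum_spannedBelow_greedyBasis hE]
      _ ≤ (∑ a ∈ V, z a) / 2 / 2 ^ t := by
          gcongr
          exact subsetExpect_card_sub_mrank_le hE hz hzP V
      _ = (∑ a ∈ V, z a) / 2 ^ (t + 1) := by
          rw [pow_succ, div_div, mul_comm]

end Covering

theorem random_subset_covered_by_few_independent_sets
    {α : Type*} [Fintype α] (N : Matroid α) (hE : N.E = Set.univ)
    (z : α → ℝ) (hz : ∀ e, 0 ≤ z e ∧ z e ≤ 1)
    (hzP : ∀ S : Finset α, ∑ e ∈ S, z e ≤ (mrank N ↑S : ℝ) / 2)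
    (t : ℕ) :
    ∑ F : Finset α, (∏ e ∈ F, z e) * (∏ e ∈ Fᶜ, (1 - z e)) *
        (if ∃ I : Fin t → Set α, (∀ j, N.Indep (I j)) ∧ ↑F ⊆ ⋃ j, I j then (0 : ℝ) else 1)
      ≤ (Fintype.card α : ℝ) / 2 ^ t := by
  have hsum : ∑ e, z e ≤ Fintype.card α := by
    simpa using sum_le_sum fun e (_ : e ∈ univ) => (hz e).2
  calc _ = subsetExpect z univ (fun F => if IsCoveredByIndep N t ↑F then 0 else 1) := by
        simp only [subsetExpect, subsetProb, powerset_univ, compl_eq_univ_sdiff]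
        congr!
    _ ≤ (∑ e, z e) / 2 ^ t := subsetExpect_not_isCoveredByIndep_le hE hz hzP t univ
    _ ≤ _ := by gcongr
end
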